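/- arXiv:2309.13571 — 6 statements merged into one kernel-verified Lean document; each statement's English description precedes it below -/
import Mathlib

section
/- Let E be a complex Hilbert space, A, M : E →L[ℂ] E continuous linear operators, y ∈ E, and ε, η real numbers with ‖id − M‖ ≤ 1, ‖id − A‖ ≤ ε < 1 and 0 < η ≤ 1. Define F : E → E by F(x) = (id − M)(x − η • A x) + y. Then F has a unique fixed point x∞ (F x∞ = x∞), and for every initial point x⁰ ∈ E the iterates F^[k](x⁰) converge to x∞ as k → ∞. -/
/-! Writing `x - η • A x = (1 - η) • x + η • (id - A) x` shows that the gradient step is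
`(1 - η + η ε)`-Lipschitz, and the projection `id - M` does not increase norms, so the
PGD map is a contraction whenever `0 < η` and `ε < 1`. Banach's fixed point theorem then
gives the unique fixed point and the convergence of the iterates. -/

lemma norm_sub_smul_apply_le {E : Type*} [SeminormedAddCommGroup E] [NormedSpace ℝ E]
    {A : E → E} {ε η : ℝ} (hA : ∀ v, ‖v - A v‖ ≤ ε * ‖v‖) (hη0 : 0 ≤ η) (hη1 : η ≤ 1)
    (v : E) : ‖v - η • A v‖ ≤ (1 - η + η * ε) * ‖v‖ :=
  calc ‖v - η • A v‖ = ‖(1 - η) • v + η • (v - A v)‖ := by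
        congr 1; simp only [sub_smul, one_smul, smul_sub]; abel
    _ ≤ ‖(1 - η) • v‖ + ‖η • (v - A v)‖ := norm_add_le _ _
    _ = (1 - η) * ‖v‖ + η * ‖v - A v‖ := by
        rw [norm_smul, norm_smul, Real.norm_of_nonneg (sub_nonneg.2 hη1),
          Real.norm_of_nonneg hη0]
    _ ≤ (1 - η) * ‖v‖ + η * (ε * ‖v‖) := by gcongr; exact hA v
    _ = (1 - η + η * ε) * ‖v‖ := by ring

section ProjectedGradientStep

variable {E : Type*} [NormedAddCommGroup E] [NormedSpace ℂ E]

lemma dist_projected_gradient_step_le (P A : E →L[ℂ] E) (y : E) {ε η : ℝ}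
    (hP : ‖P‖ ≤ 1) (hA : ‖ContinuousLinearMap.id ℂ E - A‖ ≤ ε) (hη0 : 0 ≤ η) (hη1 : η ≤ 1)
    (x x' : E) :
    dist (P (x - η • A x) + y) (P (x' - η • A x') + y) ≤ (1 - η + η * ε) * dist x x' := by
  have hstep : ∀ v, ‖v - A v‖ ≤ ε * ‖v‖ := fun v =>
    ((ContinuousLinearMap.id ℂ E - A).le_opNorm v).trans (by gcongr)
  have hdiff : P (x - η • A x) + y - (P (x' - η • A x') + y)
      = P ((x - x') - η • A (x - x')) := by
    simp only [map_sub, ContinuousLinearMap.map_smul_of_tower, smul_sub]; abel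
  rw [dist_eq_norm, dist_eq_norm, hdiff]
  calc ‖P ((x - x') - η • A (x - x'))‖ ≤ ‖P‖ * ‖(x - x') - η • A (x - x')‖ := P.le_opNorm _
    _ ≤ 1 * ((1 - η + η * ε) * ‖x - x'‖) := by
        gcongr
        exact norm_sub_smul_apply_le hstep hη0 hη1 _
    _ = (1 - η + η * ε) * ‖x - x'‖ := one_mul _

lemma contractingWith_projected_gradient_step (P A : E →L[ℂ] E) (y : E) {ε η : ℝ}
    (hP : ‖P‖ ≤ 1) (hA : ‖ContinuousLinearMap.id ℂ E - A‖ ≤ ε) (hε : ε < 1) (hη0 : 0 < η)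
    (hη1 : η ≤ 1) :
    ContractingWith (1 - η + η * ε).toNNReal (fun x => P (x - η • A x) + y) := by
  have hε0 : 0 ≤ ε := (norm_nonneg _).trans hA
  refine ⟨by rw [Real.toNNReal_lt_one]; nlinarith, LipschitzWith.of_dist_le_mul fun x x' => ?_⟩
  rw [Real.coe_toNNReal _ (by nlinarith)]
  exact dist_projected_gradient_step_le P A y hP hA hη0.le hη1 x x'

end ProjectedGradientStep

/-- Under `‖id − M‖ ≤ 1`, `‖id − A‖ ≤ ε < 1` and `0 < η ≤ 1`, the
PGD iteration map `F x = (id − M)(x − η • A x) + y` has a unique fixed point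
`x∞`, and the iterates `F^[k] x⁰` converge to `x∞` for every starting point. -/
theorem stmt_2 {E : Type*} [NormedAddCommGroup E] [InnerProductSpace ℂ E]
    [CompleteSpace E] (A M : E →L[ℂ] E) (y : E) (ε η : ℝ)
    (hM : ‖ContinuousLinearMap.id ℂ E - M‖ ≤ 1)
    (hA : ‖ContinuousLinearMap.id ℂ E - A‖ ≤ ε) (hε : ε < 1)
    (hη0 : 0 < η) (hη1 : η ≤ 1)
    (F : E → E)
    (hF : ∀ x, F x = (ContinuousLinearMap.id ℂ E - M) (x - η • A x) + y) :
    ∃ xinf : E, F xinf = xinf ∧ (∀ x : E, F x = x → x = xinf) ∧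
      ∀ x0 : E, Filter.Tendsto (fun k => F^[k] x0) Filter.atTop (nhds xinf) := by
  obtain rfl : F = fun x => (ContinuousLinearMap.id ℂ E - M) (x - η • A x) + y := funext hF
  have hF :=
    contractingWith_projected_gradient_step (ContinuousLinearMap.id ℂ E - M) A y hM hA hε hη0 hη1
  exact ⟨hF.fixedPoint _, hF.fixedPoint_isFixedPt, fun _ hx => hF.fixedPoint_unique hx,
    hF.tendsto_iterate_fixedPoint⟩
end

section
/- Let E be a complex Hilbert space, A, M : E →L[ℂ] E continuous linear operators, y ∈ E, and ε, η real numbers with ‖id − M‖ ≤ 1, ‖id − A‖ ≤ ε and 0 ≤ η ≤ 1. Define F : E → E by F(x) = (id − M)(x − η • A x) + y, and suppose x∞ ∈ E is a fixed point of F. Then for every x⁰ ∈ E and every k ∈ ℕ, ‖F^[k](x⁰) − x∞‖ ≤ (1 − η + η·ε)^k · ‖x⁰ − x∞‖. -/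
/-- If `x∞` is a fixed point of the PGD iteration map
`F x = (id − M)(x − η • A x) + y`, with `‖id − M‖ ≤ 1`, `‖id − A‖ ≤ ε` and
`0 ≤ η ≤ 1`, then the iterates converge geometrically:
`‖F^[k] x⁰ − x∞‖ ≤ (1 − η + η·ε)^k · ‖x⁰ − x∞‖`. -/
theorem stmt_3 {E : Type*} [NormedAddCommGroup E] [InnerProductSpace ℂ E]
    [CompleteSpace E] (A M : E →L[ℂ] E) (y : E) (ε η : ℝ)
    (hM : ‖ContinuousLinearMap.id ℂ E - M‖ ≤ 1)
    (hA : ‖ContinuousLinearMap.id ℂ E - A‖ ≤ ε)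
    (hη0 : 0 ≤ η) (hη1 : η ≤ 1)
    (F : E → E)
    (hF : ∀ x, F x = (ContinuousLinearMap.id ℂ E - M) (x - η • A x) + y)
    (xinf : E) (hfix : F xinf = xinf) :
    ∀ (x0 : E) (k : ℕ), ‖F^[k] x0 - xinf‖ ≤ (1 - η + η * ε) ^ k * ‖x0 - xinf‖ := by
  set c : ℝ := 1 - η + η * ε with hc
  have hε0 : 0 ≤ ε := le_trans (norm_nonneg _) hA
  have hc0 : 0 ≤ c := by
    have : 0 ≤ η * ε := mul_nonneg hη0 hε0
    nlinarith
  have key : ∀ u v : E, ‖F u - F v‖ ≤ c * ‖u - v‖ := by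
    intro u v
    have h1 : F u - F v
        = (ContinuousLinearMap.id ℂ E - M) ((u - v) - η • A (u - v)) := by
      rw [hF u, hF v]
      simp only [map_sub, smul_sub]
      abel
    rw [h1]
    have h2 : ‖(ContinuousLinearMap.id ℂ E - M) ((u - v) - η • A (u - v))‖
        ≤ ‖(u - v) - η • A (u - v)‖ := by
      calc ‖(ContinuousLinearMap.id ℂ E - M) ((u - v) - η • A (u - v))‖
          ≤ ‖ContinuousLinearMap.id ℂ E - M‖ * ‖(u - v) - η • A (u - v)‖ :=
            (ContinuousLinearMap.id ℂ E - M).le_opNorm _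
        _ ≤ 1 * ‖(u - v) - η • A (u - v)‖ :=
            mul_le_mul_of_nonneg_right hM (norm_nonneg _)
        _ = _ := one_mul _
    refine h2.trans ?_
    set d := u - v
    have h3 : d - η • A d = (1 - η) • d + η • ((ContinuousLinearMap.id ℂ E - A) d) := by
      simp only [ContinuousLinearMap.sub_apply, ContinuousLinearMap.id_apply,
        smul_sub, sub_smul, one_smul]
      abel
    rw [h3]
    calc ‖(1 - η) • d + η • ((ContinuousLinearMap.id ℂ E - A) d)‖
        ≤ ‖(1 - η) • d‖ + ‖η • ((ContinuousLinearMap.id ℂ E - A) d)‖ := norm_add_le _ _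
      _ = (1 - η) * ‖d‖ + η * ‖(ContinuousLinearMap.id ℂ E - A) d‖ := by
          rw [norm_smul, norm_smul, Real.norm_eq_abs, Real.norm_eq_abs,
            abs_of_nonneg (by linarith), abs_of_nonneg hη0]
      _ ≤ (1 - η) * ‖d‖ + η * (ε * ‖d‖) := by
          gcongr
          exact ((ContinuousLinearMap.id ℂ E - A).le_opNorm d).trans
            (mul_le_mul_of_nonneg_right hA (norm_nonneg _))
      _ = c * ‖d‖ := by ring
  intro x0 k
  induction k with
  | zero => simp
  | succ n ih =>
      rw [Function.iterate_succ_apply']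
      calc ‖F (F^[n] x0) - xinf‖ = ‖F (F^[n] x0) - F xinf‖ := by rw [hfix]
        _ ≤ c * ‖F^[n] x0 - xinf‖ := key _ _
        _ ≤ c * (c ^ n * ‖x0 - xinf‖) := mul_le_mul_of_nonneg_left ih hc0
        _ = c ^ (n + 1) * ‖x0 - xinf‖ := by ring
end

section
/- Let E be a complex Hilbert space, A : E →L[ℂ] E a positive operator (self-adjoint with re⟪A z, z⟫ ≥ 0 for all z), and M : E →L[ℂ] E an orthogonal projection (idempotent and self-adjoint). Let y, x ∈ E satisfy M x = y and (id − M)(A x) = 0. Then for every z ∈ E with M z = y, re⟪A x, x⟫ ≤ re⟪A z, z⟫; i.e., x is a global minimizer of the quadratic form z ↦ re⟪A z, z⟫ over the affine set {z : M z = y}. -/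
open RCLike

/-! Write `z = x + d`. Since the self-adjoint `M` fixes `A x` and kills `d`, the
cross term `⟪A x, d⟫` vanishes; by symmetry of `A` so does `⟪A d, x⟫`, hence
`re⟪A z, z⟫ = re⟪A x, x⟫ + re⟪A d, d⟫ ≥ re⟪A x, x⟫` by positivity. -/

section

variable {𝕜 E : Type*} [RCLike 𝕜] [NormedAddCommGroup E] [InnerProductSpace 𝕜 E]

theorem LinearMap.IsSymmetric.inner_eq_zero_of_apply_eq_self_of_apply_eq_zero
    {T : E →ₗ[𝕜] E} (hT : T.IsSymmetric) {u v : E} (hu : T u = u) (hv : T v = 0) :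
    inner 𝕜 u v = 0 := by
  rw [← hu, hT, hv, inner_zero_right]

theorem ContinuousLinearMap.IsPositive.re_inner_apply_self_le_of_inner_sub_eq_zero
    {T : E →L[𝕜] E} (hT : T.IsPositive) {x z : E} (h : inner 𝕜 (T x) (z - x) = 0) :
    re (inner 𝕜 (T x) x) ≤ re (inner 𝕜 (T z) z) := by
  set d := z - x
  have h' : inner 𝕜 (T d) x = 0 := by
    rw [hT.inner_left_eq_inner_right, ← inner_conj_symm, h, map_zero]
  have hz : z = x + d := (add_sub_cancel x z).symm
  calc re (inner 𝕜 (T x) x)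
      ≤ re (inner 𝕜 (T x) x) + re (inner 𝕜 (T d) d) := le_add_of_nonneg_right (hT.re_inner_nonneg_left d)
    _ = re (inner 𝕜 (T z) z) := by
      simp only [hz, map_add, inner_add_left, inner_add_right, h, h', add_zero, zero_add]

end

theorem stmt_6_general {E : Type*} [NormedAddCommGroup E] [InnerProductSpace ℂ E]
    [CompleteSpace E] (A M : E →L[ℂ] E)
    (hA : A.IsPositive)
    (hMsa : IsSelfAdjoint M)
    (y x : E) (hMx : M x = y)
    (hstat : (ContinuousLinearMap.id ℂ E - M) (A x) = 0) :
    ∀ z : E, M z = y →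
      re (inner ℂ (A x) x : ℂ) ≤ re (inner ℂ (A z) z : ℂ) := by
  intro z hMz
  have hM_Ax : M (A x) = A x := (sub_eq_zero.mp hstat).symm
  have hM_sub : M (z - x) = 0 := by rw [map_sub, hMz, hMx, sub_self]
  exact hA.re_inner_apply_self_le_of_inner_sub_eq_zero
    (hMsa.isSymmetric.inner_eq_zero_of_apply_eq_self_of_apply_eq_zero hM_Ax hM_sub)

/-- If `A` is a positive operator, `M` an orthogonal projection,
`M x = y` and `(id − M)(A x) = 0`, then `x` minimizes the quadratic form
`z ↦ re⟪A z, z⟫` over the affine set `{z : M z = y}`. -/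
theorem stmt_6 {E : Type*} [NormedAddCommGroup E] [InnerProductSpace ℂ E]
    [CompleteSpace E] (A M : E →L[ℂ] E)
    (hA : A.IsPositive)
    (hMM : M.comp M = M) (hMsa : IsSelfAdjoint M)
    (y x : E) (hMx : M x = y)
    (hstat : (ContinuousLinearMap.id ℂ E - M) (A x) = 0) :
    ∀ z : E, M z = y →
      re (inner ℂ (A x) x : ℂ) ≤ re (inner ℂ (A z) z : ℂ) :=
  stmt_6_general A M hA hMsa y x hMx hstat
end

section
/- Let E be a complex Hilbert space, A : E →L[ℂ] E a positive operator (self-adjoint with re⟪A z, z⟫ ≥ 0 for all z) satisfying ‖id − A‖ ≤ ε for some real ε < 1, M : E →L[ℂ] E an orthogonal projection (idempotent and self-adjoint) with ‖id − M‖ ≤ 1, y ∈ E with M y = y, and η a real number with 0 < η ≤ 1. Define F : E → E by F(x) = (id − M)(x − η • A x) + y. Then: (i) F has a unique fixed point x∞ and for every x⁰ ∈ E the iterates F^[k](x⁰) converge to x∞; (ii) M x∞ = y; and (iii) for every z ∈ E with M z = y, re⟪A x∞, x∞⟫ ≤ re⟪A z, z⟫. -/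
open RCLike

/-!
`F` is affine with linear part `(1 - M) (1 - η A)`. Writing `1 - η A = (1 - η) 1 + η (1 - A)` gives
`‖1 - η A‖ ≤ 1 - η (1 - ε) < 1`, and `1 - M` is an orthogonal projection, so `F` is a contraction
and Banach's theorem gives the fixed point `x∞` and the convergence of the iterates. Applying `M`
to `x∞ = F x∞` gives `M x∞ = y`, and then the fixed point equation reduces to
`η (M (A x∞) - A x∞) = 0`: the gradient `A x∞` lies in the range of `M`, which is orthogonal to
the feasible directions `ker M`. This first-order condition makes `x∞` a minimizer of the convex
quadratic `z ↦ re⟪A z, z⟫` on `{z | M z = y}`.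
-/

theorem norm_sub_smul_le {V : Type*} [SeminormedAddCommGroup V] [NormedSpace ℝ V] (u a : V)
    {η : ℝ} (hη0 : 0 ≤ η) (hη1 : η ≤ 1) :
    ‖u - η • a‖ ≤ (1 - η) * ‖u‖ + η * ‖u - a‖ :=
  calc ‖u - η • a‖ = ‖(1 - η) • u + η • (u - a)‖ := by congr 1; module
    _ ≤ ‖(1 - η) • u‖ + ‖η • (u - a)‖ := norm_add_le _ _
    _ = (1 - η) * ‖u‖ + η * ‖u - a‖ := by
      rw [norm_smul_of_nonneg (by linarith), norm_smul_of_nonneg hη0]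

theorem ContinuousLinearMap.contractingWith_add_const {𝕜 V : Type*} [NontriviallyNormedField 𝕜]
    [NormedAddCommGroup V] [NormedSpace 𝕜 V] {G : V →L[𝕜] V} (hG : ‖G‖ < 1) (c : V) :
    ContractingWith ‖G‖₊ (fun x => G x + c) :=
  ⟨hG, fun x x' => by simpa only [edist_add_right] using G.lipschitz x x'⟩

section ProjectedGradient

variable {E : Type*} [NormedAddCommGroup E] [NormedSpace ℂ E]
  {A M : E →L[ℂ] E} {x y : E} {ε η : ℝ}

theorem norm_one_sub_smul_le (hA : ‖1 - A‖ ≤ ε) (hη0 : 0 ≤ η) (hη1 : η ≤ 1) :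
    ‖1 - η • A‖ ≤ 1 - η * (1 - ε) :=
  calc ‖1 - η • A‖ ≤ (1 - η) * ‖(1 : E →L[ℂ] E)‖ + η * ‖1 - A‖ := norm_sub_smul_le _ _ hη0 hη1
    _ ≤ (1 - η) * 1 + η * ε := by gcongr; exact ContinuousLinearMap.norm_id_le
    _ = 1 - η * (1 - ε) := by ring

/-- Projected gradient descent step for minimizing `re⟪A x, x⟫ / 2` subject to `M x = y`. -/
noncomputable def pgdStep (A M : E →L[ℂ] E) (y : E) (η : ℝ) (x : E) : E :=
  (1 - M) (x - η • A x) + y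

theorem pgdStep_eq : pgdStep A M y η = fun x => ((1 - M) * (1 - η • A)) x + y := by
  ext x
  simp only [pgdStep, mul_apply_eq_comp, sub_apply, one_apply_eq_self, smul_apply]

theorem contractingWith_pgdStep (hA : ‖1 - A‖ ≤ ε) (hε : ε < 1) (hM : ‖1 - M‖ ≤ 1)
    (hη0 : 0 < η) (hη1 : η ≤ 1) :
    ContractingWith ‖(1 - M) * (1 - η • A)‖₊ (pgdStep A M y η) := by
  have hnorm : ‖(1 - M) * (1 - η • A)‖ < 1 :=
    calc ‖(1 - M) * (1 - η • A)‖ ≤ ‖1 - M‖ * ‖1 - η • A‖ := norm_mul_le _ _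
      _ ≤ 1 * (1 - η * (1 - ε)) :=
        mul_le_mul hM (norm_one_sub_smul_le hA hη0.le hη1) (norm_nonneg _) zero_le_one
      _ < 1 := by nlinarith
  rw [pgdStep_eq]
  exact ContinuousLinearMap.contractingWith_add_const hnorm y

theorem map_eq_of_pgdStep_eq (hM : IsIdempotentElem M) (hMy : M y = y)
    (hx : pgdStep A M y η x = x) : M x = y := by
  rw [← hx, pgdStep, map_add, ← mul_apply_eq_comp, mul_sub, mul_one, hM.eq, sub_self, zero_apply,
    zero_add, hMy]

theorem map_apply_eq_of_pgdStep_eq (hM : IsIdempotentElem M) (hMy : M y = y) (hη : η ≠ 0)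
    (hx : pgdStep A M y η x = x) : M (A x) = A x := by
  have hMx := map_eq_of_pgdStep_eq hM hMy hx
  have h : η • (M (A x) - A x) = 0 := by
    simp only [pgdStep, sub_apply, one_apply_eq_self, map_sub,
      ContinuousLinearMap.map_smul_of_tower, hMx] at hx
    linear_combination (norm := module) hx
  exact sub_eq_zero.mp ((smul_eq_zero.mp h).resolve_left hη)

end ProjectedGradient

namespace ContinuousLinearMap.IsPositive

variable {𝕜 E : Type*} [RCLike 𝕜] [NormedAddCommGroup E] [InnerProductSpace 𝕜 E]
  {A M : E →L[𝕜] E} {x z : E}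

theorem re_inner_apply_self_le_of_inner_eq_zero (hA : A.IsPositive) {w : E}
    (hw : inner 𝕜 (A x) w = 0) :
    re (inner 𝕜 (A x) x) ≤ re (inner 𝕜 (A (x + w)) (x + w)) := by
  have hw' : inner 𝕜 (A w) x = 0 := by rw [hA.inner_left_eq_inner_right, inner_eq_zero_symm, hw]
  have := hA.re_inner_nonneg_left w
  simp only [map_add, inner_add_left, inner_add_right, hw, hw', map_zero, add_zero]
  linarith

theorem re_inner_apply_self_le_of_map_eq (hA : A.IsPositive) (hM : M.IsSymmetric)
    (hAx : M (A x) = A x) (hz : M z = M x) :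
    re (inner 𝕜 (A x) x) ≤ re (inner 𝕜 (A z) z) := by
  have hker : M (z - x) = 0 := by rw [map_sub, hz, sub_self]
  have horth : inner 𝕜 (A x) (z - x) = 0 := by
    rw [← hAx, ← coe_coe, hM, coe_coe, hker, inner_zero_right]
  simpa using hA.re_inner_apply_self_le_of_inner_eq_zero horth

end ContinuousLinearMap.IsPositive

theorem stmt_7_general {E : Type*} [NormedAddCommGroup E] [InnerProductSpace ℂ E]
    [CompleteSpace E] (A M : E →L[ℂ] E) (y : E) (ε η : ℝ)
    (hA : A.IsPositive) (hAnorm : ‖ContinuousLinearMap.id ℂ E - A‖ ≤ ε)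
    (hε : ε < 1)
    (hMM : M.comp M = M) (hMsa : IsSelfAdjoint M)
    (hMy : M y = y) (hη0 : 0 < η) (hη1 : η ≤ 1)
    (F : E → E)
    (hF : ∀ x, F x = (ContinuousLinearMap.id ℂ E - M) (x - η • A x) + y) :
    ∃ xinf : E,
      (F xinf = xinf ∧ (∀ x : E, F x = x → x = xinf) ∧
        ∀ x0 : E, Filter.Tendsto (fun k => F^[k] x0) Filter.atTop (nhds xinf)) ∧
      M xinf = y ∧
      ∀ z : E, M z = y →
        re (inner ℂ (A xinf) xinf) ≤ re (inner ℂ (A z) z) := by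
  obtain rfl : F = pgdStep A M y η := funext hF
  have hM : IsStarProjection M := ⟨hMM, hMsa⟩
  have hC := contractingWith_pgdStep (y := y) hAnorm hε hM.one_sub.norm_le hη0 hη1
  have : Nonempty E := ⟨0⟩
  have hfix := hC.fixedPoint_isFixedPt
  have hMx := map_eq_of_pgdStep_eq hMM hMy hfix
  have hMAx := map_apply_eq_of_pgdStep_eq hMM hMy hη0.ne' hfix
  refine ⟨_, ⟨hfix, fun _ hx => hC.fixedPoint_unique hx, hC.tendsto_iterate_fixedPoint⟩, hMx,
    fun z hz => ?_⟩
  exact hA.re_inner_apply_self_le_of_map_eq hMsa.isSymmetric hMAx (hz.trans hMx.symm)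

/-- paper's Theorem 1: For a positive operator `A` with
`‖id − A‖ ≤ ε < 1`, an orthogonal projection `M` with `‖id − M‖ ≤ 1`,
`M y = y` and stepsize `0 < η ≤ 1`, the PGD map
`F x = (id − M)(x − η • A x) + y` has a unique fixed point `x∞` to which all
iterates converge; moreover `M x∞ = y` and `x∞` minimizes `z ↦ re⟪A z, z⟫`
over `{z : M z = y}`. -/
theorem stmt_7 {E : Type*} [NormedAddCommGroup E] [InnerProductSpace ℂ E]
    [CompleteSpace E] (A M : E →L[ℂ] E) (y : E) (ε η : ℝ)
    (hA : A.IsPositive) (hAnorm : ‖ContinuousLinearMap.id ℂ E - A‖ ≤ ε)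
    (hε : ε < 1)
    (hMM : M.comp M = M) (hMsa : IsSelfAdjoint M)
    (hMnorm : ‖ContinuousLinearMap.id ℂ E - M‖ ≤ 1)
    (hMy : M y = y) (hη0 : 0 < η) (hη1 : η ≤ 1)
    (F : E → E)
    (hF : ∀ x, F x = (ContinuousLinearMap.id ℂ E - M) (x - η • A x) + y) :
    ∃ xinf : E,
      (F xinf = xinf ∧ (∀ x : E, F x = x → x = xinf) ∧
        ∀ x0 : E, Filter.Tendsto (fun k => F^[k] x0) Filter.atTop (nhds xinf)) ∧
      M xinf = y ∧
      ∀ z : E, M z = y →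
        re (inner ℂ (A xinf) xinf) ≤ re (inner ℂ (A z) z) :=
  stmt_7_general A M y ε η hA hAnorm hε hMM hMsa hMy hη0 hη1 F hF
end

section
/- Let E be a complex Hilbert space, A : E →L[ℂ] E a positive operator (self-adjoint with re⟪A z, z⟫ ≥ 0 for all z), M : E →L[ℂ] E an orthogonal projection (idempotent and self-adjoint), y ∈ E with M y = y, and η a nonzero real number. Define F : E → E by F(x) = (id − M)(x − η • A x) + y, and let x ∈ E be a fixed point of F. If there exists x† ∈ E with M x† = y and A x† = 0, then A x = 0 and M x = y. -/
/-!
Applying the projection `M` to the fixed-point equation gives `M x = y`, after which the equation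
says that the gradient step `η • A x` lies in the range of `M`. Hence `A x` is orthogonal to
`x - x†`, which lies in `ker M`. For the positive operator `A`, `⟪A z, z⟫ = 0` forces `A z = 0`
(Cauchy–Schwarz for the semi-inner product `re ⟪A ·, ·⟫`), so `A x = A (x - x†) = 0`.
-/

open RCLike
open scoped InnerProductSpace

theorem LinearMap.IsPositive.apply_eq_zero_of_re_inner_self_eq_zero
    {𝕜 E : Type*} [RCLike 𝕜] [NormedAddCommGroup E] [InnerProductSpace 𝕜 E]
    {T : E →ₗ[𝕜] E} (hT : T.IsPositive) {z : E} (hz : re ⟪T z, z⟫_𝕜 = 0) : T z = 0 := by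
  let := InnerProductSpace.rclikeToReal 𝕜 E
  have := IsScalarTower.restrictScalars ℝ 𝕜 E
  let B : LinearMap.BilinForm ℝ E := (innerₗ E).compl₁₂ (T.restrictScalars ℝ) LinearMap.id
  have hB_symm : LinearMap.IsSymm B :=
    ⟨fun u v => (hT.isSymmetric.restrictScalars u v).trans (real_inner_comm _ _)⟩
  have hz_ker : z ∈ LinearMap.ker B :=
    (B.apply_apply_same_eq_zero_iff hT.re_inner_nonneg_left hB_symm).mp hz
  have hTz : re ⟪T z, T z⟫_𝕜 = 0 := LinearMap.congr_fun hz_ker (T z)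
  exact re_inner_self_nonpos.mp hTz.le

theorem map_eq_and_map_eq_of_sub_sub_map_sub_add_eq {F E : Type*} [AddCommGroup E]
    [FunLike F E E] [AddMonoidHomClass F E E] {M : F} (hM : ∀ v, M (M v) = M v) {x w y : E}
    (hy : M y = y) (hx : x - w - M (x - w) + y = x) : M x = y ∧ M w = w := by
  have hMx : M x = y := by
    simpa [hM, hy] using (congrArg M hx).symm
  refine ⟨hMx, ?_⟩
  rw [map_sub, hMx, ← sub_eq_zero] at hx
  rw [← sub_eq_zero, ← hx]
  abel

/-- If `A` is positive, `M` an orthogonal projection, `M y = y`,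
`η ≠ 0`, `x` is a fixed point of the PGD map
`F x = (id − M)(x − η • A x) + y`, and there exists a feasible `x†` with
`M x† = y` and `A x† = 0`, then `A x = 0` and `M x = y`. -/
theorem stmt_8 {E : Type*} [NormedAddCommGroup E] [InnerProductSpace ℂ E]
    [CompleteSpace E] (A M : E →L[ℂ] E) (y : E)
    (hA : A.IsPositive)
    (hMM : M.comp M = M) (hMsa : IsSelfAdjoint M)
    (hMy : M y = y) (η : ℝ) (hη : η ≠ 0)
    (F : E → E)
    (hF : ∀ x, F x = (ContinuousLinearMap.id ℂ E - M) (x - η • A x) + y)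
    (x : E) (hfix : F x = x)
    (hdag : ∃ xdag : E, M xdag = y ∧ A xdag = 0) :
    A x = 0 ∧ M x = y := by
  obtain ⟨xdag, hMxdag, hAxdag⟩ := hdag
  have hstep : x - η • A x - M (x - η • A x) + y = x := by simpa [hF] using hfix
  have hM_idem (v : E) : M (M v) = M v := ContinuousLinearMap.ext_iff.mp hMM v
  obtain ⟨hMx, hM_step⟩ := map_eq_and_map_eq_of_sub_sub_map_sub_add_eq hM_idem hMy hstep
  have hMAx : M (A x) = A x := smul_right_injective E hη (by simpa using hM_step)
  have hM_diff : M (x - xdag) = 0 := by rw [map_sub, hMx, hMxdag, sub_self]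
  have hA_diff : A (x - xdag) = A x := by rw [map_sub, hAxdag, sub_zero]
  have horth : ⟪A (x - xdag), x - xdag⟫_ℂ = 0 :=
    calc ⟪A (x - xdag), x - xdag⟫_ℂ = ⟪M (A x), x - xdag⟫_ℂ := by rw [hA_diff, hMAx]
      _ = ⟪A x, M (x - xdag)⟫_ℂ := hMsa.isSymmetric _ _
      _ = 0 := by rw [hM_diff, inner_zero_right]
  refine ⟨?_, hMx⟩
  rw [← hA_diff]
  exact (A.isPositive_toLinearMap_iff.mpr hA).apply_eq_zero_of_re_inner_self_eq_zero
    ((congrArg re horth).trans (map_zero _))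
end

section
/- Let P and E be real normed vector spaces, F : P × E → E a map, and xf : P → E a map satisfying xf s = F (s, xf s) for all s ∈ P. Fix s₀ ∈ P; assume xf is Fréchet differentiable at s₀ and F is Fréchet differentiable at (s₀, xf s₀), and write D := fderiv ℝ F (s₀, xf s₀), D_s u = D (u, 0), D_x v = D (0, v). Suppose there is a continuous linear operator J : E →L[ℝ] E with J ∘ (id − D_x) = id and (id − D_x) ∘ J = id. Let ℓ : E → ℝ be Fréchet differentiable at xf s₀. Then fderiv ℝ (ℓ ∘ xf) s₀ = (fderiv ℝ ℓ (xf s₀)) ∘ J ∘ D_s. -/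
/-!
Differentiating the fixed-point identity `xf s = F (s, xf s)` by the chain rule gives
`X = D_s + D_x ∘ X` for `X = xf'(s₀)`, i.e. `(id − D_x) ∘ X = D_s`; applying the left inverse `J`
yields `X = J ∘ D_s`, and one more chain rule for `ℓ ∘ xf` gives the formula.
-/

open ContinuousLinearMap

section

variable {𝕜 P E : Type*} [NontriviallyNormedField 𝕜]
  [NormedAddCommGroup P] [NormedSpace 𝕜 P] [NormedAddCommGroup E] [NormedSpace 𝕜 E]

theorem HasFDerivAt.eq_inl_add_inr_comp_of_fixedPoint {F : P × E → E} {xf : P → E}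
    (hfix : ∀ s, xf s = F (s, xf s)) {s₀ : P} {X : P →L[𝕜] E} {D : P × E →L[𝕜] E}
    (hxf : HasFDerivAt xf X s₀) (hF : HasFDerivAt F D (s₀, xf s₀)) :
    X = D ∘L inl 𝕜 P E + (D ∘L inr 𝕜 P E) ∘L X := by
  have hcomp : HasFDerivAt xf (D ∘L (ContinuousLinearMap.id 𝕜 P).prod X) s₀ := by
    have h := hF.comp s₀ ((hasFDerivAt_id s₀).prodMk hxf)
    rwa [show F ∘ (fun s => (id s, xf s)) = xf from funext fun s => (hfix s).symm] at h
  calc X = D ∘L (ContinuousLinearMap.id 𝕜 P).prod X := hxf.unique hcomp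
    _ = D ∘L inl 𝕜 P E + (D ∘L inr 𝕜 P E) ∘L X := by ext u; simp [← map_add]

theorem eq_comp_of_eq_add_comp_of_leftInverse {X Ds : P →L[𝕜] E} {Dx J : E →L[𝕜] E}
    (hJ : J ∘L (ContinuousLinearMap.id 𝕜 E - Dx) = ContinuousLinearMap.id 𝕜 E)
    (hX : X = Ds + Dx ∘L X) :
    X = J ∘L Ds :=
  calc X = (J ∘L (ContinuousLinearMap.id 𝕜 E - Dx)) ∘L X := by rw [hJ, id_comp]
    _ = J ∘L (X - Dx ∘L X) := by rw [comp_assoc, sub_comp, id_comp]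
    _ = J ∘L Ds := by rw [sub_eq_of_eq_add hX]
end

theorem stmt_12_general {P E : Type*} [NormedAddCommGroup P] [NormedSpace ℝ P]
    [NormedAddCommGroup E] [NormedSpace ℝ E]
    (F : P × E → E) (xf : P → E)
    (hfix : ∀ s : P, xf s = F (s, xf s)) (s₀ : P)
    (hxf : DifferentiableAt ℝ xf s₀)
    (hF : DifferentiableAt ℝ F (s₀, xf s₀))
    (D : P × E →L[ℝ] E) (hD : D = fderiv ℝ F (s₀, xf s₀))
    (Ds : P →L[ℝ] E) (hDs : ∀ u : P, Ds u = D (u, 0))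
    (Dx : E →L[ℝ] E) (hDx : ∀ v : E, Dx v = D (0, v))
    (J : E →L[ℝ] E)
    (hJ1 : J.comp (ContinuousLinearMap.id ℝ E - Dx) = ContinuousLinearMap.id ℝ E)
    (ℓ : E → ℝ) (hℓ : DifferentiableAt ℝ ℓ (xf s₀)) :
    fderiv ℝ (ℓ ∘ xf) s₀ = ((fderiv ℝ ℓ (xf s₀)).comp J).comp Ds := by
  have hDs' : Ds = D ∘L inl ℝ P E := ext hDs
  have hDx' : Dx = D ∘L inr ℝ P E := ext hDx
  have hX := hxf.hasFDerivAt.eq_inl_add_inr_comp_of_fixedPoint hfix (hD ▸ hF.hasFDerivAt)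
  rw [← hDs', ← hDx'] at hX
  rw [fderiv_comp s₀ hℓ hxf, eq_comp_of_eq_add_comp_of_leftInverse hJ1 hX, comp_assoc]

/-- DEQ backpropagation formula: under the hypotheses of the
implicit differentiation theorem, if moreover the loss `ℓ : E → ℝ` is
differentiable at `xf s₀`, then
`fderiv ℝ (ℓ ∘ xf) s₀ = (fderiv ℝ ℓ (xf s₀)) ∘ J ∘ D_s`. -/
theorem stmt_12 {P E : Type*} [NormedAddCommGroup P] [NormedSpace ℝ P]
    [NormedAddCommGroup E] [NormedSpace ℝ E]
    (F : P × E → E) (xf : P → E)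
    (hfix : ∀ s : P, xf s = F (s, xf s)) (s₀ : P)
    (hxf : DifferentiableAt ℝ xf s₀)
    (hF : DifferentiableAt ℝ F (s₀, xf s₀))
    (D : P × E →L[ℝ] E) (hD : D = fderiv ℝ F (s₀, xf s₀))
    (Ds : P →L[ℝ] E) (hDs : ∀ u : P, Ds u = D (u, 0))
    (Dx : E →L[ℝ] E) (hDx : ∀ v : E, Dx v = D (0, v))
    (J : E →L[ℝ] E)
    (hJ1 : J.comp (ContinuousLinearMap.id ℝ E - Dx) = ContinuousLinearMap.id ℝ E)
    (hJ2 : (ContinuousLinearMap.id ℝ E - Dx).comp J = ContinuousLinearMap.id ℝ E)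
    (ℓ : E → ℝ) (hℓ : DifferentiableAt ℝ ℓ (xf s₀)) :
    fderiv ℝ (ℓ ∘ xf) s₀ = ((fderiv ℝ ℓ (xf s₀)).comp J).comp Ds :=
  stmt_12_general F xf hfix s₀ hxf hF D hD Ds hDs Dx hDx J hJ1 ℓ hℓ
end
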